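/- The free K-vector space H on forests of planar rooted trees is generated, as an algebra under the two operations * and ≻, by the single leaf |: the smallest K-linear subspace of H containing | and closed under both * and ≻ is H itself. -/

import Mathlib

open scoped TensorProduct

/-- Planar rooted trees: a tree is either the leaf `|`, or a grafting of at
least two planar rooted trees (`graft t₁ t₂ rest` represents `[t₁, t₂, rest…]`). -/
inductive PTree : Type
  | leaf : PTree
  | graft (t₁ t₂ : PTree) (rest : List PTree) : PTree

/-- A forest is a nonempty word of planar rooted trees. -/
abbrev Forest : Type := {l : List PTree // l ≠ []}

/-- Grafting of a list of trees (only meaningful on lists of length ≥ 2;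
on shorter lists we return a junk value, which is never used). -/
def graftList : List PTree → PTree
  | [] => .leaf
  | [a] => a
  | a :: b :: rest => .graft a b rest

mutual
/-- Number of leaves of a planar rooted tree. -/
def leavesT : PTree → ℕ
  | .leaf => 1
  | .graft a b rest => leavesT a + leavesT b + leavesL rest

/-- Sum of the numbers of leaves of a list of trees. -/
def leavesL : List PTree → ℕ
  | [] => 0
  | t :: ts => leavesT t + leavesL ts
end

/-- Number of leaves of a forest. -/
def leavesF (w : Forest) : ℕ := leavesL w.1

variable (K : Type*) [Field K]

/-- `H K` is the free `K`-vector space with basis the set of forests of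
planar rooted trees. -/
abbrev H : Type _ := Forest →₀ K

/-- The leaf, as a (one-tree) forest. -/
def leafF : Forest := ⟨[PTree.leaf], by simp⟩

/-- The concatenation product `*`, as a bilinear map on `H K`;
on basis forests it is concatenation of words. -/
noncomputable def mulH : H K →ₗ[K] H K →ₗ[K] H K :=
  Finsupp.lift (H K →ₗ[K] H K) K Forest fun x =>
    Finsupp.lift (H K) K Forest fun y =>
      Finsupp.single ⟨x.1 ++ y.1, by simp [x.2]⟩ 1

/-- The grafting operation `≻` on two basis forests:
`(t₁…tₚ) ≻ (s₁…s_q) = Σ_{k=1}^{q} Σ_{i=0}^{p−1}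
t₁…t_{p−(i+1)} [t_{p−i},…,tₚ, s₁,…,s_k] s_{k+1}…s_q`. -/
noncomputable def succForest (x y : Forest) : H K :=
  ∑ k ∈ Finset.range y.1.length, ∑ i ∈ Finset.range x.1.length,
    Finsupp.single
      ⟨x.1.take (x.1.length - (i + 1)) ++
        (graftList (x.1.drop (x.1.length - (i + 1)) ++ y.1.take (k + 1)) :: y.1.drop (k + 1)),
        by simp⟩ 1

/-- The operation `≻`, as a bilinear map on `H K`. -/
noncomputable def succH : H K →ₗ[K] H K →ₗ[K] H K :=
  Finsupp.lift (H K →ₗ[K] H K) K Forest fun x =>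
    Finsupp.lift (H K) K Forest fun y => succForest K x y

/-! Induction on the number of leaves. A forest with at least two trees is the
concatenation of smaller forests. For a tree `[a, b, r₁, …, rₘ]`, the product
`a ≻ (b r₁ … rₘ)` equals this tree plus the forests `[a, b, r₁, …, r_k] r_{k+1} … rₘ`
with `k < m`, each a concatenation of two forests with fewer leaves. -/

open Finsupp

lemma leavesT_pos : ∀ t : PTree, 0 < leavesT t
  | .leaf => Nat.one_pos
  | .graft a _ _ => by have := leavesT_pos a; simp only [leavesT]; omega

lemma leavesL_append (l l' : List PTree) : leavesL (l ++ l') = leavesL l + leavesL l' := by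
  induction l with
  | nil => simp [leavesL]
  | cons t ts ih => simp only [List.cons_append, leavesL, ih]; omega

lemma leavesL_take_add_leavesL_drop (l : List PTree) (k : ℕ) :
    leavesL (l.take k) + leavesL (l.drop k) = leavesL l := by
  rw [← leavesL_append, List.take_append_drop]

lemma leavesL_pos {l : List PTree} (hl : l ≠ []) : 0 < leavesL l := by
  obtain ⟨t, ts, rfl⟩ := List.exists_cons_of_ne_nil hl
  have := leavesT_pos t
  simp only [leavesL]; omega

variable {K}

lemma mulH_single_single (x y : Forest) :
    mulH K (single x 1) (single y 1) = single ⟨x.1 ++ y.1, by simp [x.2]⟩ 1 := by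
  simp [mulH]

lemma succH_single_single (x y : Forest) :
    succH K (single x 1) (single y 1) = succForest K x y := by
  simp [succH]

lemma succForest_singleton_cons (a b : PTree) (rest : List PTree) :
    succForest K ⟨[a], by simp⟩ ⟨b :: rest, by simp⟩ =
      ∑ k ∈ Finset.range rest.length,
        single ⟨.graft a b (rest.take k) :: rest.drop k, by simp⟩ 1 +
      single ⟨[.graft a b rest], by simp⟩ 1 := by
  simp only [succForest, List.length_cons, List.length_nil, Nat.zero_add, Finset.sum_range_one,
    Nat.sub_self, List.take_zero, List.drop_zero, List.nil_append, List.singleton_append,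
    List.take_succ_cons, List.drop_succ_cons]
  rw [Finset.sum_range_succ]
  simp only [List.take_length, List.drop_length, graftList]

section Generation

variable (W : Submodule K (H K))

lemma single_append_mem (hmul : ∀ x y : H K, x ∈ W → y ∈ W → mulH K x y ∈ W)
    {l l' : List PTree} (hl : l ≠ []) (hl' : l' ≠ [])
    (h : (single ⟨l, hl⟩ 1 : H K) ∈ W) (h' : (single ⟨l', hl'⟩ 1 : H K) ∈ W) :
    (single ⟨l ++ l', by simp [hl]⟩ 1 : H K) ∈ W := by
  simpa only [mulH_single_single] using hmul _ _ h h'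

lemma single_graft_mem (hsucc : ∀ x y : H K, x ∈ W → y ∈ W → succH K x y ∈ W)
    {a b : PTree} {rest : List PTree}
    (ha : (single ⟨[a], by simp⟩ 1 : H K) ∈ W)
    (hb : (single ⟨b :: rest, by simp⟩ 1 : H K) ∈ W)
    (hlower : ∀ k < rest.length,
      (single ⟨.graft a b (rest.take k) :: rest.drop k, by simp⟩ 1 : H K) ∈ W) :
    (single ⟨[.graft a b rest], by simp⟩ 1 : H K) ∈ W := by
  have hprod := hsucc _ _ ha hb
  rw [succH_single_single, succForest_singleton_cons] at hprod
  have hsum := W.sum_mem fun k hk => hlower k (Finset.mem_range.1 hk)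
  simpa using W.sub_mem hprod hsum

lemma single_mem_of_leaf_mem (hleaf : (single leafF 1 : H K) ∈ W)
    (hmul : ∀ x y : H K, x ∈ W → y ∈ W → mulH K x y ∈ W)
    (hsucc : ∀ x y : H K, x ∈ W → y ∈ W → succH K x y ∈ W) (w : Forest) :
    (single w 1 : H K) ∈ W := by
  induction w using (measure leavesF).wf.induction with | _ w ih => ?_
  have ih' : ∀ l (hl : l ≠ []), leavesL l < leavesL w.1 →
      (single ⟨l, hl⟩ 1 : H K) ∈ W :=
    fun l hl hlt => ih ⟨l, hl⟩ hlt
  obtain ⟨l, hl⟩ := w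
  match l, hl with
  | t :: s :: ss, _ =>
    have := leavesT_pos t
    have := leavesT_pos s
    exact single_append_mem W hmul (l := [t]) (by simp) (by simp)
      (ih' _ _ (by simp only [leavesL]; omega)) (ih' _ _ (by simp only [leavesL]; omega))
  | [.leaf], _ => exact hleaf
  | [.graft a b rest], _ =>
    have := leavesT_pos a
    have := leavesT_pos b
    refine single_graft_mem W hsucc (ih' _ _ ?_) (ih' _ _ ?_) fun k hk => ?_
    · simp only [leavesL, leavesT]; omega
    · simp only [leavesL, leavesT]; omega
    have hdrop : rest.drop k ≠ [] := by simpa using hk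
    have := leavesL_take_add_leavesL_drop rest k
    have := leavesL_pos hdrop
    exact single_append_mem W hmul (l := [_]) (by simp) hdrop
      (ih' _ _ (by simp only [leavesL, leavesT]; omega))
      (ih' _ _ (by simp only [leavesL, leavesT]; omega))

end Generation

/-- `H K` is generated, under the two operations `*` and `≻`, by
the single leaf: any subspace containing the leaf and closed under both
operations is all of `H K`. -/
theorem stmt3 (K : Type*) [Field K] (W : Submodule K (H K))
    (hleaf : (Finsupp.single leafF 1 : H K) ∈ W)
    (hmul : ∀ x y : H K, x ∈ W → y ∈ W → mulH K x y ∈ W)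
    (hsucc : ∀ x y : H K, x ∈ W → y ∈ W → succH K x y ∈ W) :
    W = ⊤ := by
  rw [eq_top_iff, ← Finsupp.basisSingleOne.span_eq, Submodule.span_le]
  rintro _ ⟨w, rfl⟩
  simpa using single_mem_of_leaf_mem W hleaf hmul hsucc w
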